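/- If two HT-models M₁ and M₂ are bisimilar via a total relation Z, then for every (w₁, w₂) ∈ Z and every autoepistemic formula φ, M₁, w₁ ⊨ φ if and only if M₂, w₂ ⊨ φ. -/
import Mathlib


/-- Literals over propositions `P`: `Sum.inl p` is the atom `p`,
    `Sum.inr p` is the strongly negated atom `∼p`. -/
abbrev Lit (P : Type) : Type := P ⊕ P

/-- Autoepistemic formulas over propositions `P`. -/
inductive AForm (P : Type) : Type
  | bot  : AForm P
  | atom : P → AForm P
  | satom : P → AForm P      -- strongly negated atom ∼p
  | and  : AForm P → AForm P → AForm P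
  | or   : AForm P → AForm P → AForm P
  | imp  : AForm P → AForm P → AForm P
  | bel  : AForm P → AForm P

/-- An HT-model `(W, K, V^h, V^t)` (the condition `V^h(w) ⊆ V^t(w)` is taken
    as a hypothesis where needed). -/
structure HTModel (W P : Type) where
  K  : W → W → Prop
  Vh : W → Lit P → Prop
  Vt : W → Lit P → Prop

/-- The total model `M^t = (W, K, V^t, V^t)`. -/
def HTModel.total {W P : Type} (M : HTModel W P) : HTModel W P :=
  ⟨M.K, M.Vt, M.Vt⟩

/-- Satisfaction of autoepistemic formulas in HT-models. -/
def hsat {W P : Type} : HTModel W P → W → AForm P → Prop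
  | _, _, .bot      => False
  | M, w, .atom p   => M.Vh w (Sum.inl p)
  | M, w, .satom p  => M.Vh w (Sum.inr p)
  | M, w, .and φ ψ  => hsat M w φ ∧ hsat M w ψ
  | M, w, .or φ ψ   => hsat M w φ ∨ hsat M w ψ
  | M, w, .imp φ ψ  =>
      (hsat M w φ → hsat M w ψ) ∧ (hsat M.total w φ → hsat M.total w ψ)
  | M, w, .bel φ    => ∀ w', M.K w w' → hsat M w' φ

/-- `V^h(w) ⊆ V^t(w)` for all worlds. -/
def HTModel.persistent {W P : Type} (M : HTModel W P) : Prop :=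
  ∀ w l, M.Vh w l → M.Vt w l

/-- `M₁ ⪯^Z M₂`: `Z` is a simulation between the HT-models `M₁` and `M₂`. -/
def simZ {W₁ W₂ P : Type} (M₁ : HTModel W₁ P) (M₂ : HTModel W₂ P)
    (Z : W₁ → W₂ → Prop) : Prop :=
  (∀ w₁ w₂, Z w₁ w₂ →
      (∀ l, M₁.Vt w₁ l ↔ M₂.Vt w₂ l) ∧ (∀ l, M₁.Vh w₁ l → M₂.Vh w₂ l)) ∧
  (∀ w₁ w₁' w₂, M₁.K w₁ w₁' → Z w₁ w₂ →
      ∃ w₂', M₂.K w₂ w₂' ∧ Z w₁' w₂') ∧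
  (∀ w₂ w₂' w₁, M₂.K w₂ w₂' → Z w₁ w₂ →
      ∃ w₁', M₁.K w₁ w₁' ∧ Z w₁' w₂')

/-- A total relation: every element on each side is related to some element
    on the other side. -/
def totalRel {W₁ W₂ : Type} (Z : W₁ → W₂ → Prop) : Prop :=
  (∀ w₁, ∃ w₂, Z w₁ w₂) ∧ (∀ w₂, ∃ w₁, Z w₁ w₂)

/-- `M₁ ⪯ M₂`: there is a total simulation from `M₁` to `M₂`. -/
def preceq {W₁ W₂ P : Type} (M₁ : HTModel W₁ P) (M₂ : HTModel W₂ P) : Prop :=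
  ∃ Z : W₁ → W₂ → Prop, totalRel Z ∧ simZ M₁ M₂ Z

/-- `M₁ ≈ M₂`: bisimilarity via a total relation `Z` working in both
    directions (`Z` read backwards for the second condition). -/
def bisim {W₁ W₂ P : Type} (M₁ : HTModel W₁ P) (M₂ : HTModel W₂ P) : Prop :=
  ∃ Z : W₁ → W₂ → Prop, totalRel Z ∧ simZ M₁ M₂ Z ∧
    simZ M₂ M₁ (fun w₂ w₁ => Z w₁ w₂)


lemma bisim_hsat_pair {W₁ W₂ P : Type} (M₁ : HTModel W₁ P)
    (M₂ : HTModel W₂ P) (Z : W₁ → W₂ → Prop)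
    (h12 : simZ M₁ M₂ Z)
    (h21 : simZ M₂ M₁ (fun w₂ w₁ => Z w₁ w₂)) :
    ∀ φ : AForm P, ∀ (w₁ : W₁) (w₂ : W₂), Z w₁ w₂ →
      (hsat M₁ w₁ φ ↔ hsat M₂ w₂ φ) ∧
      (hsat M₁.total w₁ φ ↔ hsat M₂.total w₂ φ) := by
  intro φ
  induction φ with
  | bot => intro w₁ w₂ _; exact ⟨Iff.rfl, Iff.rfl⟩
  | atom p =>
    intro w₁ w₂ hz
    refine ⟨⟨fun h => (h12.1 w₁ w₂ hz).2 _ h,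
            fun h => (h21.1 w₂ w₁ hz).2 _ h⟩,
            (h12.1 w₁ w₂ hz).1 _⟩
  | satom p =>
    intro w₁ w₂ hz
    refine ⟨⟨fun h => (h12.1 w₁ w₂ hz).2 _ h,
            fun h => (h21.1 w₂ w₁ hz).2 _ h⟩,
            (h12.1 w₁ w₂ hz).1 _⟩
  | and φ ψ ihφ ihψ =>
    intro w₁ w₂ hz
    exact ⟨and_congr (ihφ w₁ w₂ hz).1 (ihψ w₁ w₂ hz).1,
           and_congr (ihφ w₁ w₂ hz).2 (ihψ w₁ w₂ hz).2⟩
  | or φ ψ ihφ ihψ =>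
    intro w₁ w₂ hz
    exact ⟨or_congr (ihφ w₁ w₂ hz).1 (ihψ w₁ w₂ hz).1,
           or_congr (ihφ w₁ w₂ hz).2 (ihψ w₁ w₂ hz).2⟩
  | imp φ ψ ihφ ihψ =>
    intro w₁ w₂ hz
    have hφ := ihφ w₁ w₂ hz
    have hψ := ihψ w₁ w₂ hz
    constructor
    · exact and_congr (imp_congr hφ.1 hψ.1) (imp_congr hφ.2 hψ.2)
    · show ((_ → _) ∧ (_ → _)) ↔ ((_ → _) ∧ (_ → _))
      exact and_congr (imp_congr hφ.2 hψ.2) (imp_congr hφ.2 hψ.2)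
  | bel φ ih =>
    intro w₁ w₂ hz
    have main : (∀ w', M₁.K w₁ w' → hsat M₁ w' φ) ↔
        (∀ w', M₂.K w₂ w' → hsat M₂ w' φ) := by
      constructor
      · intro h w₂' hk
        obtain ⟨w₁', hk₁, hz'⟩ := h21.2.1 w₂ w₂' w₁ hk hz
        exact ((ih w₁' w₂' hz').1).mp (h w₁' hk₁)
      · intro h w₁' hk
        obtain ⟨w₂', hk₂, hz'⟩ := h12.2.1 w₁ w₁' w₂ hk hz
        exact ((ih w₁' w₂' hz').1).mpr (h w₂' hk₂)
    have maint : (∀ w', M₁.K w₁ w' → hsat M₁.total w' φ) ↔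
        (∀ w', M₂.K w₂ w' → hsat M₂.total w' φ) := by
      constructor
      · intro h w₂' hk
        obtain ⟨w₁', hk₁, hz'⟩ := h21.2.1 w₂ w₂' w₁ hk hz
        exact ((ih w₁' w₂' hz').2).mp (h w₁' hk₁)
      · intro h w₁' hk
        obtain ⟨w₂', hk₂, hz'⟩ := h12.2.1 w₁ w₁' w₂ hk hz
        exact ((ih w₁' w₂' hz').2).mpr (h w₂' hk₂)
    exact ⟨main, maint⟩

/-- bisimilar HT-models satisfy the same autoepistemic
    formulas at `Z`-related worlds. -/
theorem bisim_hsat_iff {W₁ W₂ P : Type} (M₁ : HTModel W₁ P)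
    (M₂ : HTModel W₂ P) (Z : W₁ → W₂ → Prop)
    (htot : totalRel Z) (h12 : simZ M₁ M₂ Z)
    (h21 : simZ M₂ M₁ (fun w₂ w₁ => Z w₁ w₂)) :
    ∀ (w₁ : W₁) (w₂ : W₂), Z w₁ w₂ →
      ∀ φ : AForm P, (hsat M₁ w₁ φ ↔ hsat M₂ w₂ φ) := by
  intro w₁ w₂ hz φ
  exact (bisim_hsat_pair M₁ M₂ Z h12 h21 φ w₁ w₂ hz).1
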